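/- arXiv:0809.1201 — 4 statements merged into one kernel-verified Lean document; each statement's English description precedes it below -/
import Mathlib

section
/- Let f : X → Y be a localizing morphism of noetherian schemes. Then the following are equivalent: (i) f is set-theoretically injective; (ii) f is separated and the induced map from the set of generic points of X to the set of generic points of Y is injective. -/
/-! Every stalk map of a localizing morphism `f : X ⟶ Y` is an isomorphism, so a point `x` over
`y` yields a section `Spec 𝒪_{Y,y} ⟶ X` of `f` over `Y.fromSpecStalk y` whose image is the set of
generizations of `x`. Given `f x₁ = f x₂ = y`, pick `p ∈ Spec 𝒪_{Y,y}` over a generic point of `Y`.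
The two sections send `p` to generic points of `X` with the same image, hence to the same point;
their stalk maps there are both inverse to those of `f`, so they agree on `Spec 𝒪_p`. When `f` is
separated the locus where two `Y`-morphisms agree is closed, so it contains the closed point, whose
images are `x₁` and `x₂`. -/

open AlgebraicGeometry CategoryTheory CategoryTheory.Limits TopologicalSpace Opposite

universe u

/-- A ring homomorphism `φ : A →+* B` is a localization homomorphism if it realizes `B` as a
localization of `A` at some multiplicative subset, with `φ` as the canonical map. -/
def IsLocalizationHom {A B : Type u} [CommRing A] [CommRing B] (φ : A →+* B) : Prop :=
  ∃ M : Submonoid A, @IsLocalization A _ M B _ φ.toAlgebra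

/-- A ring homomorphism `φ : A →+* B` is essentially of finite type if it realizes `B` as a
localization of a finitely generated `A`-algebra. -/
def IsEssFiniteTypeHom {A B : Type u} [CommRing A] [CommRing B] (φ : A →+* B) : Prop :=
  @Algebra.EssFiniteType A B _ _ φ.toAlgebra

/-- A morphism of schemes is localizing if every point `y` of the target has an affine open
neighborhood `V = Spec A` such that `f ⁻¹ V` is covered by finitely many affine opens
`Uᵢ = Spec Bᵢ` for which the induced ring homomorphisms `A →+* Bᵢ` are localization
homomorphisms. -/
def IsLocalizingMorphism {X Y : Scheme.{u}} (f : X ⟶ Y) : Prop :=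
  ∀ y : Y, ∃ V : Y.affineOpens, y ∈ V.1 ∧
    ∃ 𝒰 : Finset X.affineOpens,
      (∀ x : X, f.base x ∈ V.1 → ∃ U ∈ 𝒰, x ∈ U.1) ∧
      ∀ U ∈ 𝒰, ∃ hle : U.1 ≤ f ⁻¹ᵁ V.1, IsLocalizationHom (f.appLE V.1 U.1 hle).hom

/-- A localizing immersion is a localizing morphism that is set-theoretically injective. -/
def IsLocalizingImmersion {X Y : Scheme.{u}} (f : X ⟶ Y) : Prop :=
  IsLocalizingMorphism f ∧ Function.Injective f.base

/-- A morphism of schemes is essentially of finite type if every point `y` of the target has an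
affine open neighborhood `V = Spec A` such that `f ⁻¹ V` is covered by finitely many affine
opens `Uᵢ = Spec Bᵢ` for which the induced ring homomorphisms `A →+* Bᵢ` are essentially of
finite type. -/
def IsEssentiallyFiniteType {X Y : Scheme.{u}} (f : X ⟶ Y) : Prop :=
  ∀ y : Y, ∃ V : Y.affineOpens, y ∈ V.1 ∧
    ∃ 𝒰 : Finset X.affineOpens,
      (∀ x : X, f.base x ∈ V.1 → ∃ U ∈ 𝒰, x ∈ U.1) ∧
      ∀ U ∈ 𝒰, ∃ hle : U.1 ≤ f ⁻¹ᵁ V.1, IsEssFiniteTypeHom (f.appLE V.1 U.1 hle).hom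

/-- A generic point of a scheme: a point whose closure is an irreducible component. -/
def IsGenericPointOf (X : Scheme.{u}) (x : X) : Prop :=
  closure ({x} : Set X) ∈ irreducibleComponents X

theorem IsLocalization.bijective_localRingHom {A B : Type*} [CommRing A] [CommRing B]
    [Algebra A B] (M : Submonoid A) [IsLocalization M B] (p : Ideal A) [p.IsPrime]
    (q : Ideal B) [q.IsPrime] (hpq : p = q.comap (algebraMap A B)) :
    Function.Bijective (Localization.localRingHom p q (algebraMap A B) hpq) := by
  subst hpq
  have := isLocalization_isLocalization_atPrime_isLocalization M (Localization.AtPrime q) q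
  let e := IsLocalization.algEquiv (q.comap (algebraMap A B)).primeCompl
    (Localization.AtPrime (q.comap (algebraMap A B))) (Localization.AtPrime q)
  convert e.bijective
  exact congrArg DFunLike.coe <| IsLocalization.ringHom_ext (q.comap (algebraMap A B)).primeCompl
    (by ext a; simp [← IsScalarTower.algebraMap_apply])

theorem IsLocalizingMorphism.isIso_stalkMap {X Y : Scheme.{u}} {f : X ⟶ Y}
    (hf : IsLocalizingMorphism f) (x : X) : IsIso (f.stalkMap x) := by
  obtain ⟨V, hxV, 𝒰, hcov, hloc⟩ := hf (f x)
  obtain ⟨U, hU, hxU⟩ := hcov x hxV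
  obtain ⟨hUV, M, hM⟩ := hloc U hU
  let := (f.appLE V.1 U.1 hUV).hom.toAlgebra
  rw [Arrow.isIso_iff_isIso_of_isIso
    (IsAffineOpen.arrowStalkMapIso f V.1 V.2 U.1 U.2 hUV hxU).hom,
    ConcreteCategory.isIso_iff_bijective]
  exact IsLocalization.bijective_localRingHom M _ _
    congr($(IsAffineOpen.comap_primeIdealOf_appLE V.1 V.2 U.1 U.2 hUV hxU).1).symm

section genericPoints

variable {α : Type*} [TopologicalSpace α]

theorem exists_mem_genericPoints_specializes [QuasiSober α] (x : α) :
    ∃ η ∈ genericPoints α, η ⤳ x :=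
  let η := genericPoints.ofComponent
    ⟨irreducibleComponent x, irreducibleComponent_mem_irreducibleComponents x⟩
  ⟨η.1, η.2, (genericPoints.isGenericPoint_ofComponent _).specializes mem_irreducibleComponent⟩

theorem eq_of_specializes_of_mem_genericPoints [T0Space α] {x y : α}
    (hx : x ∈ genericPoints α) (hyx : y ⤳ x) : y = x :=
  have hxy := hx.2 isIrreducible_singleton.closure (specializes_iff_closure_subset.mp hyx)
  (hyx.antisymm (specializes_iff_closure_subset.mpr hxy)).eq

theorem mem_genericPoints_of_forall_specializes [QuasiSober α] {x : α}
    (hx : ∀ y, y ⤳ x → y = x) : x ∈ genericPoints α := by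
  obtain ⟨η, hη, hηx⟩ := exists_mem_genericPoints_specializes x
  rwa [← hx η hηx]

theorem mem_genericPoints_of_injective_comp {β T : Type*} [TopologicalSpace β] [QuasiSober α]
    [T0Space β] {f : α → β} (hf : Continuous f) {g : T → α}
    (hfg : Function.Injective (f ∘ g)) (hg : StableUnderGeneralization (Set.range g)) {t : T}
    (ht : f (g t) ∈ genericPoints β) : g t ∈ genericPoints α := by
  refine mem_genericPoints_of_forall_specializes fun y hy ↦ ?_
  obtain ⟨s, rfl⟩ := hg hy ⟨t, rfl⟩
  rw [hfg (eq_of_specializes_of_mem_genericPoints ht (hy.map hf))]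

end genericPoints

namespace AlgebraicGeometry

open IsLocalRing

theorem apply_eq_of_specializes_of_isSeparated {S T W X : Scheme.{u}} (s : X ⟶ S)
    [IsSeparated s] {g₁ g₂ : T ⟶ X} (h : g₁ ≫ s = g₂ ≫ s) (ι : W ⟶ T)
    (hι : ι ≫ g₁ = ι ≫ g₂) {w : W} {t : T} (ht : ι w ⤳ t) : g₁ t = g₂ t := by
  let g₁' : Over.mk (g₁ ≫ s) ⟶ Over.mk s := Over.homMk g₁
  let g₂' : Over.mk (g₁ ≫ s) ⟶ Over.mk s := Over.homMk g₂ h.symm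
  let ι' : Over.mk (ι ≫ g₁ ≫ s) ⟶ Over.mk (g₁ ≫ s) := Over.homMk ι
  have : IsSeparated (Over.mk s).hom := ‹_›
  -- `s` being separated makes the equalizer of `g₁'` and `g₂'` a closed subscheme of `T`.
  obtain ⟨e, rfl⟩ : t ∈ Set.range (equalizer.ι g₁' g₂').left := by
    refine ht.mem_closed (equalizer.ι g₁' g₂').left.isClosedEmbedding.isClosed_range
      ⟨(equalizer.lift ι' (by ext1; exact hι)).left w, ?_⟩
    rw [← Scheme.Hom.comp_apply, ← Over.comp_left, equalizer.lift_ι]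
    rfl
  simp only [← Scheme.Hom.comp_apply]
  exact congr($(equalizer.condition g₁' g₂').left e)

namespace Scheme.Hom

theorem ext_of_isIso_stalkMap {X Y : Scheme.{u}} {R : CommRingCat.{u}} [IsLocalRing R]
    {f : X ⟶ Y} {a b : Spec R ⟶ X} [IsIso (f.stalkMap (a (closedPoint R)))]
    (h : a ≫ f = b ≫ f) (hab : a (closedPoint R) = b (closedPoint R)) : a = b := by
  apply (SpecToEquivOfLocalRing X R).injective
  refine SpecToEquivOfLocalRing_eq_iff.mpr ⟨hab, ?_⟩
  obtain ⟨_, hY⟩ := SpecToEquivOfLocalRing_eq_iff.mp (congrArg (SpecToEquivOfLocalRing Y R) h)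
  simp only [SpecToEquivOfLocalRing_apply_snd_coe, stalkClosedPointTo_comp] at hY
  change stalkClosedPointTo a = (X.presheaf.stalkCongr (.of_eq hab)).hom ≫ stalkClosedPointTo b
  rw [← cancel_epi (f.stalkMap _), hY, stalkMap_congr_point_assoc f _ _ hab]
  rfl

section stalkSection

variable {X Y : Scheme.{u}} (f : X ⟶ Y) {x : X} {y : Y} (h : f x = y) [IsIso (f.stalkMap x)]

noncomputable def stalkSection : Spec (Y.presheaf.stalk y) ⟶ X :=
  Spec.map (inv (f.stalkMap x) ≫ (Y.presheaf.stalkCongr (.of_eq h)).hom) ≫ X.fromSpecStalk x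

theorem stalkSection_comp : f.stalkSection h ≫ f = Y.fromSpecStalk y := by
  subst h
  simp [stalkSection, ← SpecMap_stalkMap_fromSpecStalk]

theorem stalkSection_closedPoint : f.stalkSection h (closedPoint (Y.presheaf.stalk y)) = x := by
  refine (comp_apply _ _ _).trans ?_
  rw [Spec_closedPoint, fromSpecStalk_closedPoint]

theorem range_stalkSection : Set.range (f.stalkSection h) = {z | z ⤳ x} := by
  rw [stalkSection, comp_base, TopCat.coe_comp, Function.Surjective.range_comp,
    range_fromSpecStalk]
  exact (Spec.map _).surjective

theorem stalkSection_mem_genericPoints {p : Spec (Y.presheaf.stalk y)}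
    (hp : Y.fromSpecStalk y p ∈ genericPoints Y) : f.stalkSection h p ∈ genericPoints X := by
  have hcomp : ⇑f ∘ ⇑(f.stalkSection h) = Y.fromSpecStalk y := by
    rw [← stalkSection_comp f h]
    rfl
  refine mem_genericPoints_of_injective_comp f.continuous ?_ ?_
    (by rwa [← Function.comp_apply (f := ⇑f), hcomp])
  · rw [hcomp]
    exact (Y.fromSpecStalk y).isEmbedding.injective
  · rw [range_stalkSection]
    exact fun _ _ hzw hwx ↦ hzw.trans hwx

end stalkSection

end Scheme.Hom

end AlgebraicGeometry

theorem injective_iff_separated_and_injOn_genericPoints_general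
    {X Y : Scheme.{u}} (f : X ⟶ Y)
    (hf : IsLocalizingMorphism f) :
    Function.Injective f.base ↔
      IsSeparated f ∧ Set.InjOn f.base {x : X | IsGenericPointOf X x} := by
  refine ⟨fun h ↦ ⟨isSeparated_of_injective f h, h.injOn⟩, ?_⟩
  rintro ⟨_, hinj⟩ x₁ x₂ (hx : f x₁ = f x₂)
  have := hf.isIso_stalkMap
  have hg₁ := f.stalkSection_comp hx
  have hg₂ := f.stalkSection_comp (rfl : f x₂ = f x₂)
  obtain ⟨η, hη, hηy⟩ := exists_mem_genericPoints_specializes (f x₂)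
  obtain ⟨p, rfl⟩ : η ∈ Set.range (Y.fromSpecStalk (f x₂)) := by
    rwa [Scheme.range_fromSpecStalk]
  have hp : f.stalkSection hx p = f.stalkSection rfl p :=
    hinj (f.stalkSection_mem_genericPoints hx hη) (f.stalkSection_mem_genericPoints rfl hη)
      (by rw [← Scheme.Hom.comp_apply, ← Scheme.Hom.comp_apply, hg₁, hg₂])
  have hloc : (Spec _).fromSpecStalk p ≫ f.stalkSection hx =
      (Spec _).fromSpecStalk p ≫ f.stalkSection rfl :=
    Scheme.Hom.ext_of_isIso_stalkMap (by rw [Category.assoc, Category.assoc, hg₁, hg₂])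
      (by convert hp using 1 <;>
        exact (Scheme.Hom.comp_apply _ _ _).trans (congrArg _ Scheme.fromSpecStalk_closedPoint))
  have := apply_eq_of_specializes_of_isSeparated f (hg₁.trans hg₂.symm) _ hloc
    (w := IsLocalRing.closedPoint _) (t := IsLocalRing.closedPoint _)
    (by rw [Scheme.fromSpecStalk_closedPoint]; exact IsLocalRing.specializes_closedPoint p)
  rwa [Scheme.Hom.stalkSection_closedPoint, Scheme.Hom.stalkSection_closedPoint] at this

/-- For a localizing morphism `f` of noetherian schemes, `f` is set-theoretically injective
iff `f` is separated and the induced map on generic points is injective. -/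
theorem injective_iff_separated_and_injOn_genericPoints
    {X Y : Scheme.{u}} [IsNoetherian X] [IsNoetherian Y] (f : X ⟶ Y)
    (hf : IsLocalizingMorphism f) :
    Function.Injective f.base ↔
      IsSeparated f ∧ Set.InjOn f.base {x : X | IsGenericPointOf X x} :=
  injective_iff_separated_and_injOn_genericPoints_general f hf
end

section
/- A localizing immersion of noetherian schemes that is a morphism of finite type is an open immersion. -/
/-! Formalization of a statement from "Compactification for essentially finite-type maps"
(S. Nayak). All schemes are noetherian where stated. -/

open AlgebraicGeometry CategoryTheory CategoryTheory.Limits TopologicalSpace Opposite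

universe u

/-!
A localization `A → S⁻¹A` is flat and an epimorphism of rings, so `Spec S⁻¹A → Spec A` is a flat
monomorphism; when it is also of finite presentation (automatic for finite type over a noetherian
base) it is an open immersion. Hence a localizing morphism of finite type is an open immersion on
each affine open of a suitable cover of the source, and an injective map that is locally on the
source an open immersion is an open immersion.
-/

lemma isOpenImmersion_SpecMap_of_isLocalizationHom_of_finitePresentation {R S : CommRingCat.{u}}
    (φ : R ⟶ S) (hloc : IsLocalizationHom φ.hom) (hfp : φ.hom.FinitePresentation) :
    IsOpenImmersion (Spec.map φ) := by
  let := φ.hom.toAlgebra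
  obtain ⟨M, hM⟩ := hloc
  have : Flat (Spec.map φ) :=
    HasRingHomProperty.Spec_iff.mpr (RingHom.flat_algebraMap_iff.mpr (IsLocalization.flat S M))
  have : LocallyOfFinitePresentation (Spec.map φ) := HasRingHomProperty.Spec_iff.mpr hfp
  have : Epi φ := IsLocalization.epi M S
  have : Mono (Spec.map φ) := Scheme.Spec.map_mono φ.op
  exact IsOpenImmersion.of_flat_of_mono _

lemma IsLocalizingMorphism.exists_isOpenImmersion_fromSpec_comp {X Y : Scheme.{u}} {f : X ⟶ Y}
    (hf : IsLocalizingMorphism f) (hfp : LocallyOfFinitePresentation f) (x : X) :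
    ∃ U : X.affineOpens, x ∈ U.1 ∧ IsOpenImmersion (U.2.fromSpec ≫ f) := by
  obtain ⟨V, hxV, 𝒰, h𝒰, hloc⟩ := hf (f x)
  obtain ⟨U, hU, hxU⟩ := h𝒰 x hxV
  obtain ⟨e, hUV⟩ := hloc U hU
  have hSpec := isOpenImmersion_SpecMap_of_isLocalizationHom_of_finitePresentation _ hUV
    (HasRingHomProperty.appLE @LocallyOfFinitePresentation f hfp V U e)
  refine ⟨U, hxU, ?_⟩
  rw [← IsAffineOpen.SpecMap_appLE_fromSpec f V.2 U.2 e]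
  exact @IsOpenImmersion.comp _ _ _ _ _ hSpec V.2.isOpenImmersion_fromSpec

lemma IsLocalizingMorphism.isOpenImmersion {X Y : Scheme.{u}} {f : X ⟶ Y}
    (hf : IsLocalizingMorphism f) (hinj : Function.Injective f.base)
    (hfp : LocallyOfFinitePresentation f) : IsOpenImmersion f := by
  refine IsOpenImmersion.of_forall_source_exists f hinj fun x ↦ ?_
  obtain ⟨U, hxU, hU⟩ := hf.exists_isOpenImmersion_fromSpec_comp hfp x
  exact ⟨_, U.2.fromSpec, U.2.isOpenImmersion_fromSpec, by rwa [U.2.opensRange_fromSpec], hU⟩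

theorem isOpenImmersion_of_isLocalizingImmersion_of_finiteType_general
    {X Y : Scheme.{u}} [IsNoetherian Y] (f : X ⟶ Y)
    (hf : IsLocalizingImmersion f)
    (hft : LocallyOfFiniteType f) :
    IsOpenImmersion f :=
  hf.1.isOpenImmersion hf.2 (LocallyOfFinitePresentation.iff_locallyOfFiniteType.mpr hft)

/-- A localizing immersion of noetherian schemes that is of finite type is an open
immersion. -/
theorem isOpenImmersion_of_isLocalizingImmersion_of_finiteType
    {X Y : Scheme.{u}} [IsNoetherian X] [IsNoetherian Y] (f : X ⟶ Y)
    (hf : IsLocalizingImmersion f)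
    (hft : LocallyOfFiniteType f) (hqc : QuasiCompact f) :
    IsOpenImmersion f :=
  isOpenImmersion_of_isLocalizingImmersion_of_finiteType_general f hf hft
end

section
/- If f : X → Y is a localizing immersion of noetherian schemes, then every coherent ideal sheaf I ⊆ O_X extends to Y: there exists a coherent ideal sheaf J ⊆ O_Y such that the ideal J·O_X generated by the pullback of J in O_X equals I. -/
/-!
Over an affine open `V = Spec A` of `Y`, let `J(V)` consist of the `a ∈ A` whose pullback lies in
the stalk `I_x` at every point `x` of `f⁻¹ V`. Comparing stalks, `J(V)·Γ(X, U) = I(U)` reduces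
to `I(U) ⊆ J(V)·Γ(X, U)` for affine opens `U = Spec S⁻¹A` localizing over `V`, that is: if
`a|_U ∈ I(U)` then `s a ∈ J(V)` for some `s ∈ S`. As `f⁻¹ V` is quasi-compact, this may be
checked on one affine `U'` at a time. If no `s ∈ S` pulls `a` into `I(U')`, then `(I(U') : a)`
lies in a prime of `Γ(X, U')` avoiding `S`. The image in `Spec A` of its point `x` avoids `S`, so
it is also the image of a point of `U`, and injectivity of `f` puts `x` itself in `U`. But near
`x ∈ U` the section `a` lies in `I`, so `(I(U') : a)` is not contained in that prime. The same
quasi-compactness argument with `S = {rⁿ}` shows that `J` commutes with restriction to basic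
opens, so `J` is quasi-coherent.
-/

open AlgebraicGeometry CategoryTheory CategoryTheory.Limits TopologicalSpace Opposite

universe u

/-- A quasi-coherent ideal sheaf on a scheme, described by its ideals of sections over affine
opens (on a noetherian scheme these are exactly the coherent ideal sheaves). -/
structure QCohIdeal (X : Scheme.{u}) where
  ideal : ∀ U : X.affineOpens, Ideal Γ(X, U.1)
  map_eq : ∀ (U V : X.affineOpens) (h : V.1 ≤ U.1),
    ideal V = Ideal.map (X.presheaf.map (homOfLE h).op).hom (ideal U)

section Localization

variable {A B C : Type u} [CommRing A] [CommRing B] [CommRing C]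

theorem IsLocalizationHom.comp {φ : A →+* B} {ψ : B →+* C}
    (hψ : IsLocalizationHom ψ) (hφ : IsLocalizationHom φ) : IsLocalizationHom (ψ.comp φ) := by
  obtain ⟨M, hM⟩ := hφ
  obtain ⟨N, hN⟩ := hψ
  let _ := φ.toAlgebra; let _ := ψ.toAlgebra; let _ := (ψ.comp φ).toAlgebra
  have : IsScalarTower A B C := .of_algebraMap_eq fun _ ↦ rfl
  exact ⟨_, IsLocalization.localization_localization_isLocalization M N C⟩

theorem IsLocalizationHom.of_comp {φ : A →+* B} {ψ : B →+* C}
    (hφ : IsLocalizationHom φ) (hψφ : IsLocalizationHom (ψ.comp φ)) : IsLocalizationHom ψ := by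
  obtain ⟨M, hM⟩ := hφ
  obtain ⟨T, hT⟩ := hψφ
  let _ := φ.toAlgebra; let _ := ψ.toAlgebra; let _ := (ψ.comp φ).toAlgebra
  have : IsScalarTower A B C := .of_algebraMap_eq fun _ ↦ rfl
  -- saturate `T` so that it contains `M`
  have : IsLocalization ((IsUnit.submonoid C).comap (ψ.comp φ)) C :=
    IsLocalization.of_le T _ (fun t ht ↦ IsLocalization.map_units C ⟨t, ht⟩) fun _ h ↦ h
  have hMN : M ≤ (IsUnit.submonoid C).comap (ψ.comp φ) := fun m hm ↦
    (IsLocalization.map_units B ⟨m, hm⟩).map ψ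
  exact ⟨_, IsLocalization.isLocalization_of_submonoid_le B C M _ hMN⟩

theorem IsLocalization.le_map_of_forall_exists_mul_mem {R S : Type*} [CommRing R] [CommRing S]
    [Algebra R S] (M : Submonoid R) [IsLocalization M S] {I : Ideal S} {J : Ideal R}
    (h : ∀ a, algebraMap R S a ∈ I → ∃ t ∈ M, t * a ∈ J) : I ≤ J.map (algebraMap R S) := by
  rw [← IsLocalization.map_under M S I, Ideal.map_le_iff_le_comap]
  exact fun a ha ↦ (IsLocalization.algebraMap_mem_map_algebraMap_iff M (S := S) J a).mpr (h a ha)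

theorem Submonoid.exists_forall_mem_ideal {R ι : Type*} [CommRing R]
    (M : Submonoid R) (s : Finset ι) (K : ι → Ideal R) (h : ∀ i ∈ s, ∃ t ∈ M, t ∈ K i) :
    ∃ t ∈ M, ∀ i ∈ s, t ∈ K i := by
  choose! t htM htK using h
  exact ⟨∏ i ∈ s, t i, Submonoid.prod_mem M htM, fun i hi ↦
    Ideal.mem_of_dvd _ (Finset.dvd_prod_of_mem t hi) (htK i hi)⟩

end Localization

namespace AlgebraicGeometry

lemma IsAffineOpen.exists_primeIdealOf_eq {X : Scheme.{u}} {U : X.Opens} (hU : IsAffineOpen U)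
    (q : PrimeSpectrum Γ(X, U)) : ∃ x : U, hU.primeIdealOf x = q :=
  ⟨hU.isoSpec.inv q, by
    change (hU.isoSpec.inv ≫ hU.isoSpec.hom) q = q
    rw [Iso.inv_hom_id]
    rfl⟩

variable {X Y : Scheme.{u}} (f : X ⟶ Y)

lemma Scheme.Hom.appLE_germ {V : Y.Opens} {U : X.Opens} (e : U ≤ f ⁻¹ᵁ V) (x : X) (hx : x ∈ U) :
    f.appLE V U e ≫ X.presheaf.germ U x hx = Y.presheaf.germ V (f x) (e hx) ≫ f.stalkMap x := by
  simp only [Scheme.Hom.appLE, Category.assoc, TopCat.Presheaf.germ_res]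
  exact (f.germ_stalkMap V x (e hx)).symm

lemma Scheme.Hom.germ_appLE_apply {V : Y.Opens} {U : X.Opens} (e : U ≤ f ⁻¹ᵁ V) (x : X)
    (hx : x ∈ U) (a : Γ(Y, V)) :
    X.presheaf.germ U x hx (f.appLE V U e a) = f.stalkMap x (Y.presheaf.germ V (f x) (e hx) a) :=
  congr($(f.appLE_germ e x hx).hom a)

lemma isLocalizationHom_presheaf_map_of_eq_basicOpen {V D : X.Opens} (hV : IsAffineOpen V)
    (r : Γ(X, V)) (hD : D = X.basicOpen r) (hDV : D ≤ V) :
    IsLocalizationHom (X.presheaf.map (homOfLE hDV).op).hom :=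
  ⟨_, hV.isLocalization_of_eq_basicOpen r (homOfLE hDV) hD⟩

lemma isLocalizationHom_appLE_iff_of_eq_basicOpen {V D : Y.Opens} (hV : IsAffineOpen V)
    (r : Γ(Y, V)) (hD : D = Y.basicOpen r) (hDV : D ≤ V) {U : X.Opens} (e : U ≤ f ⁻¹ᵁ D) :
    IsLocalizationHom (f.appLE V U (e.trans (f.preimage_mono hDV))).hom ↔
      IsLocalizationHom (f.appLE D U e).hom := by
  have hρ := isLocalizationHom_presheaf_map_of_eq_basicOpen hV r hD hDV
  rw [← f.map_appLE e (homOfLE hDV).op, CommRingCat.hom_comp]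
  exact ⟨hρ.of_comp, (·.comp hρ)⟩

end AlgebraicGeometry

namespace QCohIdeal

variable {X : Scheme.{u}} (I : QCohIdeal X)

lemma map_germ_eq_of_le {U W : X.affineOpens} (h : W.1 ≤ U.1) (x : X) (hx : x ∈ W.1) :
    (I.ideal U).map (X.presheaf.germ U.1 x (h hx)).hom =
      (I.ideal W).map (X.presheaf.germ W.1 x hx).hom := by
  rw [I.map_eq U W h, Ideal.map_map, ← CommRingCat.hom_comp, X.presheaf.germ_res]

lemma map_germ_eq_of_mem {U U' : X.affineOpens} (x : X) (hx : x ∈ U.1) (hx' : x ∈ U'.1) :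
    (I.ideal U).map (X.presheaf.germ U.1 x hx).hom =
      (I.ideal U').map (X.presheaf.germ U'.1 x hx').hom := by
  obtain ⟨r, r', hrr', hxr⟩ := exists_basicOpen_le_affine_inter U.2 U'.2 x ⟨hx, hx'⟩
  have hU' : X.basicOpen r ≤ U'.1 := hrr' ▸ X.basicOpen_le r'
  rw [I.map_germ_eq_of_le (W := X.affineBasicOpen r) (X.basicOpen_le r) x hxr,
    I.map_germ_eq_of_le (W := X.affineBasicOpen r) hU' x hxr]

noncomputable def stalk (x : X) : Ideal (X.presheaf.stalk x) :=
  ⨆ (U : X.affineOpens) (hx : x ∈ U.1), (I.ideal U).map (X.presheaf.germ U.1 x hx).hom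

lemma map_germ_eq_stalk {U : X.affineOpens} (x : X) (hx : x ∈ U.1) :
    (I.ideal U).map (X.presheaf.germ U.1 x hx).hom = I.stalk x :=
  le_antisymm (le_iSup₂ (f := fun U hx ↦ (I.ideal U).map (X.presheaf.germ U.1 x hx).hom) U hx)
    (iSup₂_le fun _ hx' ↦ (I.map_germ_eq_of_mem x hx' hx).le)

lemma mem_ideal_iff {U : X.affineOpens} (b : Γ(X, U.1)) :
    b ∈ I.ideal U ↔ ∀ (x : X) (hx : x ∈ U.1), X.presheaf.germ U.1 x hx b ∈ I.stalk x := by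
  rw [U.2.mem_ideal_iff]
  exact forall₂_congr fun x hx ↦ by rw [I.map_germ_eq_stalk]

lemma germ_mem_stalk_iff {U : X.affineOpens} (x : X) (hx : x ∈ U.1) (b : Γ(X, U.1)) :
    X.presheaf.germ U.1 x hx b ∈ I.stalk x ↔
      ∃ s ∉ (U.2.primeIdealOf ⟨x, hx⟩).asIdeal, s * b ∈ I.ideal U := by
  let _ := X.presheaf.algebra_section_stalk (⟨x, hx⟩ : U.1)
  have := U.2.isLocalization_stalk ⟨x, hx⟩
  rw [← I.map_germ_eq_stalk x hx]
  exact IsLocalization.algebraMap_mem_map_algebraMap_iff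
    (U.2.primeIdealOf ⟨x, hx⟩).asIdeal.primeCompl (S := X.presheaf.stalk x) _ _

lemma exists_pow_mul_mem_of_germ_mem {U : X.affineOpens} (g b : Γ(X, U.1))
    (h : ∀ (x : X) (hx : x ∈ X.basicOpen g),
      X.presheaf.germ U.1 x (X.basicOpen_le g hx) b ∈ I.stalk x) :
    ∃ n : ℕ, g ^ n * b ∈ I.ideal U := by
  have := U.2.isLocalization_basicOpen g
  have hb : X.presheaf.map (homOfLE (X.basicOpen_le g)).op b ∈ I.ideal (X.affineBasicOpen g) := by
    refine (I.mem_ideal_iff _).mpr fun x (hx : x ∈ X.basicOpen g) ↦ ?_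
    convert h x hx using 1
    exact X.presheaf.germ_res_apply (homOfLE (X.basicOpen_le g)) x hx b
  rw [I.map_eq U _ (X.basicOpen_le g)] at hb
  obtain ⟨_, ⟨n, rfl⟩, hn⟩ := (IsLocalization.algebraMap_mem_map_algebraMap_iff
    (Submonoid.powers g) (S := Γ(X, X.basicOpen g)) _ _).mp hb
  exact ⟨n, hn⟩

end QCohIdeal

section LocalizingMorphism

variable {X Y : Scheme.{u}} {f : X ⟶ Y}

lemma IsLocalizingMorphism.exists_isLocalizationHom_appLE (hf : IsLocalizingMorphism f)
    (V : Y.affineOpens) {x : X} (hx : f x ∈ V.1) :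
    ∃ (U : X.affineOpens) (e : U.1 ≤ f ⁻¹ᵁ V.1),
      x ∈ U.1 ∧ IsLocalizationHom (f.appLE V.1 U.1 e).hom := by
  obtain ⟨V', hxV', 𝒰, h𝒰, hloc⟩ := hf (f x)
  obtain ⟨U, hU𝒰, hxU⟩ := h𝒰 x hxV'
  obtain ⟨e', hU⟩ := hloc U hU𝒰
  -- `W = U ∩ f⁻¹ D(r)` is basic in `U`, and `D(r)` is basic in both `V` and `V'`
  obtain ⟨r, r', hrr', hxr⟩ := exists_basicOpen_le_affine_inter V.2 V'.2 (f x) ⟨hx, hxV'⟩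
  set g := f.appLE V'.1 U.1 e' r'
  have hW : X.basicOpen g = U.1 ⊓ f ⁻¹ᵁ Y.basicOpen r := by rw [Scheme.basicOpen_appLE, hrr']
  have eW : X.basicOpen g ≤ f ⁻¹ᵁ Y.basicOpen r := hW.trans_le inf_le_right
  have hrV' : Y.basicOpen r ≤ V'.1 := hrr' ▸ Y.basicOpen_le r'
  have hWV' : IsLocalizationHom
      (f.appLE V'.1 (X.basicOpen g) (eW.trans (f.preimage_mono hrV'))).hom := by
    rw [← f.appLE_map e' (homOfLE (X.basicOpen_le g)).op, CommRingCat.hom_comp]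
    exact (isLocalizationHom_presheaf_map_of_eq_basicOpen U.2 g rfl _).comp hU
  have hWr : IsLocalizationHom (f.appLE (Y.basicOpen r) (X.basicOpen g) eW).hom :=
    (isLocalizationHom_appLE_iff_of_eq_basicOpen f V'.2 r' hrr' hrV' eW).mp hWV'
  refine ⟨X.affineBasicOpen g, _, ?_,
    (isLocalizationHom_appLE_iff_of_eq_basicOpen f V.2 r rfl (Y.basicOpen_le r) eW).mpr hWr⟩
  change x ∈ X.basicOpen g
  rw [hW]
  exact ⟨hxU, hxr⟩

lemma IsLocalizingMorphism.quasiCompact (hf : IsLocalizingMorphism f) : QuasiCompact f := by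
  choose V hyV 𝒰 h𝒰 hloc using hf
  have hcompact (y : Y) : IsCompact (f ⁻¹ᵁ (V y).1 : Set X) := by
    have : (f ⁻¹ᵁ (V y).1 : Set X) = ⋃ U ∈ 𝒰 y, (U.1 : Set X) := by
      refine subset_antisymm (fun x hx ↦ ?_) (Set.iUnion₂_subset fun U hU ↦ (hloc y U hU).1)
      obtain ⟨U, hU, hxU⟩ := h𝒰 y x hx
      exact Set.mem_biUnion hU hxU
    rw [this]
    exact (𝒰 y).isCompact_biUnion fun U _ ↦ U.2.isCompact
  -- instance search fails to unify the affine property, so the instance is passed by hand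
  exact @HasAffineProperty.of_iSup_eq_top @QuasiCompact _
    instHasAffinePropertyQuasiCompactCompactSpaceCarrierCarrierCommRingCat _ _ f _ V
    (top_le_iff.mp fun y _ ↦ Opens.mem_iSup.mpr ⟨y, hyV y⟩)
    fun y ↦ isCompact_iff_compactSpace.mp (hcompact y)

lemma mem_of_disjoint_primeIdealOf {V : Y.affineOpens} {U : X.affineOpens}
    (hf : Function.Injective f.base) (e : U.1 ≤ f ⁻¹ᵁ V.1) (M : Submonoid Γ(Y, V.1))
    (hM : @IsLocalization _ _ M Γ(X, U.1) _ (f.appLE V.1 U.1 e).hom.toAlgebra)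
    {x : X} (hx : f x ∈ V.1)
    (hdisj : Disjoint (M : Set Γ(Y, V.1)) (V.2.primeIdealOf ⟨f x, hx⟩).asIdeal) : x ∈ U.1 := by
  let _ := (f.appLE V.1 U.1 e).hom.toAlgebra
  set p := V.2.primeIdealOf ⟨f x, hx⟩
  have hr : (p.asIdeal.map (f.appLE V.1 U.1 e).hom).IsPrime :=
    IsLocalization.isPrime_of_isPrime_disjoint M _ _ p.2 hdisj
  obtain ⟨x', hx'⟩ := U.2.exists_primeIdealOf_eq ⟨_, hr⟩
  have hp : V.2.primeIdealOf ⟨f x', e x'.2⟩ = p := by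
    ext1
    rw [← IsAffineOpen.comap_primeIdealOf_appLE (f := f) V.1 V.2 U.1 U.2 e x'.2, hx']
    exact IsLocalization.under_map_of_isPrime_disjoint M _ p.2 hdisj
  have hfx : f x' = f x := calc
    f x' = V.2.fromSpec (V.2.primeIdealOf ⟨f x', e x'.2⟩) :=
      (V.2.fromSpec_primeIdealOf ⟨f x', e x'.2⟩).symm
    _ = f x := by rw [hp, V.2.fromSpec_primeIdealOf]
  exact hf hfx ▸ x'.2

end LocalizingMorphism

namespace QCohIdeal

variable {X Y : Scheme.{u}} (I : QCohIdeal X) {f : X ⟶ Y}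

variable (f) in
/-- The sections over `V` of the ideal sheaf `ker (𝒪_Y → f_* (𝒪_X ⧸ I))`. -/
noncomputable def mapIdeal (V : Y.Opens) : Ideal Γ(Y, V) :=
  ⨅ (x : X) (hx : f x ∈ V), (I.stalk x).comap (Y.presheaf.germ V (f x) hx ≫ f.stalkMap x).hom

lemma mem_mapIdeal_iff {V : Y.Opens} {a : Γ(Y, V)} :
    a ∈ I.mapIdeal f V ↔
      ∀ (x : X) (hx : f x ∈ V), f.stalkMap x (Y.presheaf.germ V (f x) hx a) ∈ I.stalk x := by
  simp only [mapIdeal, Submodule.mem_iInf, Ideal.mem_comap, CommRingCat.hom_comp,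
    RingHom.comp_apply]

lemma exists_mul_mem_mapIdeal {V : Y.Opens} (hV : IsCompact (f ⁻¹ᵁ V : Set X))
    (M : Submonoid Γ(Y, V)) (a : Γ(Y, V))
    (h : ∀ (U : X.affineOpens) (e : U.1 ≤ f ⁻¹ᵁ V), ∃ t ∈ M, f.appLE V U.1 e (t * a) ∈ I.ideal U) :
    ∃ t ∈ M, t * a ∈ I.mapIdeal f V := by
  let ι := {U : X.affineOpens // U.1 ≤ f ⁻¹ᵁ V}
  have hcover : (f ⁻¹ᵁ V : Set X) ⊆ ⋃ U : ι, (U.1.1 : Set X) := fun x hx ↦ by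
    obtain ⟨_, ⟨U, hU, rfl⟩, hxU, hUV⟩ :=
      X.isBasis_affineOpens.exists_subset_of_mem_open hx (f ⁻¹ᵁ V).2
    exact Set.mem_iUnion.mpr ⟨⟨⟨U, hU⟩, hUV⟩, hxU⟩
  obtain ⟨s, hs⟩ := hV.elim_finite_subcover _ (fun U : ι ↦ U.1.1.isOpen) hcover
  obtain ⟨t, htM, ht⟩ := M.exists_forall_mem_ideal s
    (fun U ↦ ((I.ideal U.1).comap (f.appLE V U.1.1 U.2).hom).colon (Ideal.span {a}))
    fun U _ ↦ by simpa only [Ideal.mem_colon_span_singleton, Ideal.mem_comap] using h U.1 U.2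
  refine ⟨t, htM, I.mem_mapIdeal_iff.mpr fun x hx ↦ ?_⟩
  obtain ⟨U, hUs, hxU⟩ := Set.mem_iUnion₂.mp (hs hx)
  rw [← f.germ_appLE_apply U.2 x hxU]
  exact (I.mem_ideal_iff _).mp
    (Ideal.mem_comap.mp (Ideal.mem_colon_span_singleton.mp (ht U hUs))) x hxU

lemma exists_mem_appLE_mul_mem {V : Y.affineOpens} {U : X.affineOpens}
    (hf : Function.Injective f.base) (e : U.1 ≤ f ⁻¹ᵁ V.1) (M : Submonoid Γ(Y, V.1))
    (hM : @IsLocalization _ _ M Γ(X, U.1) _ (f.appLE V.1 U.1 e).hom.toAlgebra)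
    {a : Γ(Y, V.1)} (ha : f.appLE V.1 U.1 e a ∈ I.ideal U)
    (U' : X.affineOpens) (e' : U'.1 ≤ f ⁻¹ᵁ V.1) :
    ∃ t ∈ M, f.appLE V.1 U'.1 e' (t * a) ∈ I.ideal U' := by
  set φ := (f.appLE V.1 U'.1 e').hom
  by_contra! h
  set Q := (I.ideal U').colon (Ideal.span {φ a})
  have hQM : Disjoint (Q : Set Γ(X, U'.1)) (M.map φ) := by
    refine Set.disjoint_left.mpr fun _ hQ ⟨t, htM, hφt⟩ ↦ h t htM ?_
    rw [map_mul, hφt]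
    exact Ideal.mem_colon_span_singleton.mp hQ
  obtain ⟨q, hq, hQq, hqM⟩ := Ideal.exists_le_prime_disjoint Q (M.map φ) hQM
  obtain ⟨x, hx⟩ := U'.2.exists_primeIdealOf_eq ⟨q, hq⟩
  have hxU : x.1 ∈ U.1 := by
    refine mem_of_disjoint_primeIdealOf hf e M hM (e' x.2) (Set.disjoint_left.mpr ?_)
    intro t htM htq
    rw [← IsAffineOpen.comap_primeIdealOf_appLE (f := f) V.1 V.2 U'.1 U'.2 e' x.2, hx] at htq
    exact Set.disjoint_left.mp hqM htq ⟨t, htM, rfl⟩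
  have hgerm : X.presheaf.germ U'.1 x x.2 (φ a) ∈ I.stalk x := by
    rw [f.germ_appLE_apply, ← f.germ_appLE_apply e x hxU]
    exact (I.mem_ideal_iff _).mp ha x hxU
  obtain ⟨s, hsq, hs⟩ := (I.germ_mem_stalk_iff x x.2 _).mp hgerm
  rw [hx] at hsq
  exact hsq (hQq (Ideal.mem_colon_span_singleton.mpr hs))

lemma map_mapIdeal_basicOpen [QuasiCompact f] (V : Y.affineOpens) (r : Γ(Y, V.1)) :
    (I.mapIdeal f V.1).map (Y.presheaf.map (homOfLE (Y.basicOpen_le r)).op).hom =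
      I.mapIdeal f (Y.basicOpen r) := by
  set ρ := (Y.presheaf.map (homOfLE (Y.basicOpen_le r)).op).hom
  have hρ (x : X) (hx : f x ∈ Y.basicOpen r) (a : Γ(Y, V.1)) :
      Y.presheaf.germ _ (f x) hx (ρ a) = Y.presheaf.germ V.1 (f x) (Y.basicOpen_le r hx) a :=
    Y.presheaf.germ_res_apply _ _ _ a
  refine le_antisymm (Ideal.map_le_iff_le_comap.mpr fun a ha ↦ I.mem_mapIdeal_iff.mpr
    fun x hx ↦ ?_) ?_
  · rw [hρ]
    exact I.mem_mapIdeal_iff.mp ha x _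
  have := V.2.isLocalization_basicOpen r
  refine IsLocalization.le_map_of_forall_exists_mul_mem (Submonoid.powers r) fun a ha ↦ ?_
  refine I.exists_mul_mem_mapIdeal (f.isCompact_preimage V.2.isCompact) _ a
    fun U e ↦ ?_
  obtain ⟨n, hn⟩ := I.exists_pow_mul_mem_of_germ_mem (f.appLE V.1 U.1 e r) (f.appLE V.1 U.1 e a)
    fun x hx ↦ by
      rw [Scheme.basicOpen_appLE] at hx
      rw [f.germ_appLE_apply, ← hρ x hx.2]
      exact I.mem_mapIdeal_iff.mp ha x hx.2
  exact ⟨r ^ n, ⟨n, rfl⟩, by rwa [map_mul, map_pow]⟩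

lemma ideal_le_map_mapIdeal [QuasiCompact f] (hf : Function.Injective f.base) {V : Y.affineOpens}
    {U : X.affineOpens} (e : U.1 ≤ f ⁻¹ᵁ V.1) (hU : IsLocalizationHom (f.appLE V.1 U.1 e).hom) :
    I.ideal U ≤ (I.mapIdeal f V.1).map (f.appLE V.1 U.1 e).hom := by
  obtain ⟨M, hM⟩ := hU
  let _ := (f.appLE V.1 U.1 e).hom.toAlgebra
  exact IsLocalization.le_map_of_forall_exists_mul_mem M fun a ha ↦
    I.exists_mul_mem_mapIdeal (f.isCompact_preimage V.2.isCompact) M a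
      (I.exists_mem_appLE_mul_mem hf e M hM ha)

lemma map_mapIdeal_eq_stalk (hf : IsLocalizingImmersion f) (V : Y.affineOpens) (x : X)
    (hx : f x ∈ V.1) :
    (I.mapIdeal f V.1).map (Y.presheaf.germ V.1 (f x) hx ≫ f.stalkMap x).hom = I.stalk x := by
  have := hf.1.quasiCompact
  refine le_antisymm (Ideal.map_le_iff_le_comap.mpr fun a ha ↦ I.mem_mapIdeal_iff.mp ha x hx) ?_
  obtain ⟨U, e, hxU, hU⟩ := hf.1.exists_isLocalizationHom_appLE V hx
  calc I.stalk x = (I.ideal U).map (X.presheaf.germ U.1 x hxU).hom :=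
        (I.map_germ_eq_stalk x hxU).symm
    _ ≤ ((I.mapIdeal f V.1).map (f.appLE V.1 U.1 e).hom).map (X.presheaf.germ U.1 x hxU).hom :=
      Ideal.map_mono (I.ideal_le_map_mapIdeal hf.2 e hU)
    _ = _ := by rw [Ideal.map_map, ← CommRingCat.hom_comp, f.appLE_germ]

lemma map_appLE_mapIdeal (hf : IsLocalizingImmersion f) (V : Y.affineOpens) (U : X.affineOpens)
    (e : U.1 ≤ f ⁻¹ᵁ V.1) : (I.mapIdeal f V.1).map (f.appLE V.1 U.1 e).hom = I.ideal U := by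
  refine U.2.ideal_ext_iff.mpr fun x hx ↦ ?_
  rw [Ideal.map_map, ← CommRingCat.hom_comp, f.appLE_germ, I.map_germ_eq_stalk]
  exact I.map_mapIdeal_eq_stalk hf V x (e hx)

end QCohIdeal

theorem isLocalizingImmersion_ideal_extension_general
    {X Y : Scheme.{u}} (f : X ⟶ Y)
    (hf : IsLocalizingImmersion f) (I : QCohIdeal X) :
    ∃ J : QCohIdeal Y,
      ∀ (V : Y.affineOpens) (U : X.affineOpens) (hle : U.1 ≤ f ⁻¹ᵁ V.1),
        Ideal.map (f.appLE V.1 U.1 hle).hom (J.ideal V) = I.ideal U := by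
  have := hf.1.quasiCompact
  -- `IdealSheafData.map_ideal` extends compatibility with basic opens to all affine restrictions
  let J : Y.IdealSheafData :=
    { ideal V := I.mapIdeal f V.1
      map_ideal_basicOpen V r := I.map_mapIdeal_basicOpen V r }
  exact ⟨⟨J.ideal, fun V V' h ↦ (J.map_ideal h).symm⟩, I.map_appLE_mapIdeal hf⟩

/-- Every coherent ideal sheaf on the source of a localizing immersion of noetherian schemes
extends to a coherent ideal sheaf on the target: there is an ideal sheaf `J` on `Y` with
`J·O_X = I`. -/
theorem isLocalizingImmersion_ideal_extension
    {X Y : Scheme.{u}} [IsNoetherian X] [IsNoetherian Y] (f : X ⟶ Y)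
    (hf : IsLocalizingImmersion f) (I : QCohIdeal X) :
    ∃ J : QCohIdeal Y,
      ∀ (V : Y.affineOpens) (U : X.affineOpens) (hle : U.1 ≤ f ⁻¹ᵁ V.1),
        Ideal.map (f.appLE V.1 U.1 hle).hom (J.ideal V) = I.ideal U :=
  isLocalizingImmersion_ideal_extension_general f hf I
end

section
/- A morphism of noetherian schemes is a localizing immersion if and only if it is a localizing morphism that is a monomorphism in the category of schemes. -/
/-! Formalization of a statement from "Compactification for essentially finite-type maps"
(S. Nayak). All schemes are noetherian where stated. -/

open AlgebraicGeometry CategoryTheory CategoryTheory.Limits TopologicalSpace Opposite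

universe u

/-! A localization `A → S⁻¹A` induces isomorphisms of local rings, so a localizing morphism is
surjective on stalks. A morphism that is surjective on stalks and injective on points is a
monomorphism, and every monomorphism of schemes is injective on points. -/

lemma IsLocalizationHom.surjectiveOnStalks {A B : Type u} [CommRing A] [CommRing B]
    {φ : A →+* B} (hφ : IsLocalizationHom φ) : φ.SurjectiveOnStalks := by
  obtain ⟨M, hM⟩ := hφ
  let := φ.toAlgebra
  exact RingHom.surjectiveOnStalks_of_isLocalization M B

lemma RingHom.surjectiveOnStalks_stableUnderCompositionWithLocalizationAwaySource :
    RingHom.StableUnderCompositionWithLocalizationAwaySource RingHom.SurjectiveOnStalks :=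
  fun _ S _ _ _ _ _ r _ _ hf ↦
    hf.comp (RingHom.surjectiveOnStalks_of_isLocalization (.powers r) S)

lemma IsLocalizingMorphism.surjectiveOnStalks {X Y : Scheme.{u}} {f : X ⟶ Y}
    (hf : IsLocalizingMorphism f) : SurjectiveOnStalks f := by
  rw [HasRingHomProperty.iff_exists_appLE (P := @SurjectiveOnStalks)
    RingHom.surjectiveOnStalks_stableUnderCompositionWithLocalizationAwaySource]
  intro x
  obtain ⟨V, hxV, 𝒰, h𝒰, h𝒰loc⟩ := hf (f.base x)
  obtain ⟨U, hU𝒰, hxU⟩ := h𝒰 x hxV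
  obtain ⟨hle, hUloc⟩ := h𝒰loc U hU𝒰
  exact ⟨V, U, hxU, hle, hUloc.surjectiveOnStalks⟩

theorem isLocalizingImmersion_iff_isLocalizingMorphism_and_mono_general
    {X Y : Scheme.{u}} (f : X ⟶ Y) :
    IsLocalizingImmersion f ↔ IsLocalizingMorphism f ∧ Mono f := by
  refine ⟨fun ⟨hloc, hinj⟩ ↦ ⟨hloc, ?_⟩, fun ⟨hloc, _⟩ ↦ ⟨hloc, f.injective⟩⟩
  have := hloc.surjectiveOnStalks
  exact SurjectiveOnStalks.mono_of_injective hinj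

/-- A morphism of noetherian schemes is a localizing immersion iff it is a localizing morphism
that is a monomorphism in the category of schemes. -/
theorem isLocalizingImmersion_iff_isLocalizingMorphism_and_mono
    {X Y : Scheme.{u}} [IsNoetherian X] [IsNoetherian Y] (f : X ⟶ Y) :
    IsLocalizingImmersion f ↔ IsLocalizingMorphism f ∧ Mono f :=
  isLocalizingImmersion_iff_isLocalizingMorphism_and_mono_general f
end
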